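/- With the action G^-(i - 1/2) = (ell + 1 - i) Psi^-(i - 1/2) + sum_{n>=1} chi_{-n} Psi^-(n + i - 1/2) on F and Omega_ell = Psi^+(-ell-1/2)...Psi^+(-3/2) 1, if S_ell(-chi_{-1}, ..., -chi_{-ell}) = 0 then the vector w = G^-(3/2) G^-(5/2) ... G^-(ell - 1/2) Omega_ell satisfies G^-(n - 1/2) w = 0 for all integers n >= 1, and w is nonzero, having the form w = (-1)^{ell-1}(ell-1)! Psi^+(-ell - 1/2) 1 + a_1 Psi^+(-ell + 1/2) 1 + ... + a_{ell-1} Psi^+(-3/2) 1 for some complex numbers a_i. -/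

import Mathlib

noncomputable def schurA : PowerSeries (MvPolynomial ℕ ℚ) :=
  PowerSeries.mk fun n => if n = 0 then 0 else MvPolynomial.C ((n : ℚ)⁻¹) * MvPolynomial.X n

/-- `S` is the family of Schur polynomials, i.e. the coefficients of the formal power
series `exp (∑_{n≥1} (x_n/n) yⁿ) = ∑_r S_r yʳ`.  Since `schurA` has zero constant term,
the coefficient of `yʳ` in its exponential is the finite sum
`∑_{k≤r} (1/k!) · [yʳ] (schurA ^ k)`. -/
def IsSchurFamily (S : ℕ → MvPolynomial ℕ ℚ) : Prop :=
  ∀ r : ℕ, S r = ∑ k ∈ Finset.range (r + 1),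
    ((k.factorial : ℚ)⁻¹) • PowerSeries.coeff (R := MvPolynomial ℕ ℚ) r (schurA ^ k)

/-- The fermionic Fock space `F` for the Clifford algebra `CL`:
`ψp n` is `Ψ⁺(n + 1/2)` and `ψm n` is `Ψ⁻(n + 1/2)` for `n : ℤ`. -/
structure CliffordFock (V : Type) [AddCommGroup V] [Module ℂ V] where
  ψp : ℤ → Module.End ℂ V
  ψm : ℤ → Module.End ℂ V
  vac : V
  anti_pm : ∀ r s : ℤ, ψp r * ψm s + ψm s * ψp r = if r + s + 1 = 0 then 1 else 0
  anti_pp : ∀ r s : ℤ, ψp r * ψp s + ψp s * ψp r = 0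
  anti_mm : ∀ r s : ℤ, ψm r * ψm s + ψm s * ψm r = 0
  vac_p : ∀ n : ℤ, 0 ≤ n → ψp n vac = 0
  vac_m : ∀ n : ℤ, 0 ≤ n → ψm n vac = 0
  basis : Module.Basis (Finset ℕ × Finset ℕ) ℂ V
  basis_eq : ∀ A B : Finset ℕ,
    basis (A, B) =
      ((((A.sort (· ≤ ·)).reverse.map fun n => ψm (-(n + 1 : ℤ))).prod *
        ((B.sort (· ≤ ·)).reverse.map fun n => ψp (-(n + 1 : ℤ))).prod) vac)

variable {V : Type} [AddCommGroup V] [Module ℂ V]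

/-- `Ω_s = Ψ⁺(-s-1/2) Ψ⁺(-s+1/2) ⋯ Ψ⁺(-3/2) |0⟩`. -/
noncomputable def CliffordFock.Omega (M : CliffordFock V) (s : ℕ) : V :=
  (((List.range' 1 s).reverse.map fun n => M.ψp (-(n + 1 : ℤ))).prod) M.vac

/-- `Gm i` is the operator `G⁻(i - 1/2) = (ℓ + 1 - i) Ψ⁻(i - 1/2) + ∑_{n ≥ 1} χ_{-n} Ψ⁻(n + i - 1/2)`,
encoded by truncations (on each fixed vector the sum stabilizes). -/
def IsGmFamily (M : CliffordFock V) (ℓ : ℤ) (χ : ℕ → ℂ) (Gm : ℤ → Module.End ℂ V) : Prop :=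
  ∀ (i : ℤ) (v : V), ∃ N : ℕ, ∀ N' : ℕ, N ≤ N' →
    Gm i v = ((ℓ + 1 - i : ℤ) : ℂ) • M.ψm (i - 1) v +
      ∑ n ∈ Finset.Icc 1 N', χ n • M.ψm ((n : ℤ) + i - 1) v

/-!
Write `c_j = S_j(-χ)`. Differentiating `exp (∑ xₙ yⁿ / n)` gives the recursion
`r c_r + ∑_{j<r} χ_{-(r-j)} c_j = 0`. Since `Ψ⁻(m + 1/2)` kills `Ω_k` for `m > k` and removes its
factor `Ψ⁺(-k - 1/2)` for `m = k`, applying `G⁻(k + 3/2)` to `Ψ⁺(-s - 1/2) Ω_{k+1}` lowers `Ω` by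
one mode and produces one new vector `χ_{-(s-k-1)} Ω_{k+1}`. By the recursion these new vectors
assemble into the next Schur coefficient, so that for `t + k + 1 = ℓ`
`G⁻(k + 3/2) ⋯ G⁻(ℓ - 1/2) Ω_ℓ = (-1)ᵗ t! ∑_{j ≤ t} c_j Ψ⁺(-(ℓ-j) - 1/2) Ω_k`.
At `k = 0` this is `w`, a combination of one-fermion states whose `Ψ⁺(-ℓ - 1/2) 1` coefficient is
`(-1)^(ℓ-1) (ℓ-1)!`. Then `G⁻(p + 1/2) w` is a multiple of `1` whose coefficient is again the
recursion, at `r = ℓ - p`; for `p = 0` it vanishes because `c_ℓ = 0`.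
-/

open Finset PowerSeries

section TruncatedExp

variable {R : Type*} [CommRing R] [Algebra ℚ R]

noncomputable def expTrunc (N : ℕ) (f : R⟦X⟧) : R⟦X⟧ :=
  ∑ k ∈ range N, ((k.factorial : ℚ)⁻¹) • f ^ k

theorem derivative_expTrunc_succ (N : ℕ) (f : R⟦X⟧) :
    derivative R (expTrunc (N + 1) f) = expTrunc N f * derivative R f := by
  rw [expTrunc, sum_range_succ', expTrunc, sum_mul, map_add, map_sum, pow_zero,
    Derivation.map_smul_of_tower, Derivation.map_one_eq_zero, smul_zero, add_zero]
  refine sum_congr rfl fun k _ => ?_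
  rw [Derivation.map_smul_of_tower, Derivation.leibniz_pow, Nat.add_sub_cancel, smul_eq_mul,
    ← Nat.cast_smul_eq_nsmul ℚ, smul_smul, smul_mul_assoc, Nat.factorial_succ]
  congr 1
  push_cast
  field_simp

end TruncatedExp

theorem constantCoeff_schurA : constantCoeff schurA = 0 := by
  simp [schurA, ← coeff_zero_eq_constantCoeff_apply]

theorem coeff_schurA_pow_of_lt {k n : ℕ} (h : n < k) :
    coeff n (schurA ^ k) = 0 :=
  X_pow_dvd_iff.1 (pow_dvd_pow_of_dvd (X_dvd_iff.2 constantCoeff_schurA) k) n h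

theorem coeff_derivative_schurA (m : ℕ) :
    coeff m (derivative _ schurA) = MvPolynomial.X (m + 1) := by
  have hm : ((m : MvPolynomial ℕ ℚ) + 1) = MvPolynomial.C ((m + 1 : ℕ) : ℚ) := by simp
  rw [coeff_derivative, schurA, coeff_mk, if_neg m.succ_ne_zero, hm, mul_right_comm, ← map_mul,
    inv_mul_cancel₀ (by positivity), map_one, one_mul]

def SchurRecursion (χ c : ℕ → ℂ) : Prop :=
  ∀ r, ∑ j ∈ range r, χ (r - j) * c j = -r * c r

namespace IsSchurFamily

variable {S : ℕ → MvPolynomial ℕ ℚ}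

theorem eq_coeff_expTrunc (hS : IsSchurFamily S) {r N : ℕ} (h : r < N) :
    S r = coeff r (expTrunc N schurA) := by
  rw [hS r, expTrunc, map_sum]
  simp only [coeff_smul]
  refine sum_subset (range_subset_range.2 h) fun k _ hk => ?_
  rw [coeff_schurA_pow_of_lt (by simpa using hk), smul_zero]

theorem succ_mul (hS : IsSchurFamily S) (r : ℕ) :
    ((r : MvPolynomial ℕ ℚ) + 1) * S (r + 1) =
      ∑ i ∈ range (r + 1), S i * MvPolynomial.X (r - i + 1) := by
  calc ((r : MvPolynomial ℕ ℚ) + 1) * S (r + 1)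
      = coeff r (derivative _ (expTrunc (r + 2) schurA)) := by
        rw [coeff_derivative, ← hS.eq_coeff_expTrunc (by omega), mul_comm]
    _ = ∑ i ∈ range (r + 1), S i * MvPolynomial.X (r - i + 1) := by
        rw [derivative_expTrunc_succ, coeff_mul, Nat.sum_antidiagonal_eq_sum_range_succ_mk]
        refine sum_congr rfl fun i hi => ?_
        rw [coeff_derivative_schurA, ← hS.eq_coeff_expTrunc (by simpa using hi)]

theorem aeval_zero (hS : IsSchurFamily S) {A : Type*} [CommRing A] [Algebra ℚ A]
    (x : ℕ → A) : MvPolynomial.aeval x (S 0) = 1 := by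
  simp [hS 0]

theorem schurRecursion_aeval_neg (hS : IsSchurFamily S) (χ : ℕ → ℂ) :
    SchurRecursion χ fun j => MvPolynomial.aeval (fun n => -χ n) (S j) := by
  intro r
  cases r with
  | zero => simp
  | succ r =>
    have h := congrArg (MvPolynomial.aeval fun n => -χ n) (hS.succ_mul r)
    simp only [map_mul, map_add, map_natCast, map_one, map_sum, MvPolynomial.aeval_X] at h
    rw [Nat.cast_succ, neg_mul, h, ← sum_neg_distrib]
    refine sum_congr rfl fun j hj => ?_
    rw [show r + 1 - j = r - j + 1 by have := mem_range.1 hj; omega]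
    ring

end IsSchurFamily

/-- The bracket is the vacuum coefficient of `G⁻(p + 1/2) Ψ⁺(-(ℓ-j) - 1/2) 1`. -/
theorem sum_mul_ite_eq_zero {c χ : ℕ → ℂ} (hc : SchurRecursion χ c)
    {ℓ : ℕ} (hcℓ : c ℓ = 0) (p : ℕ) :
    ∑ j ∈ range ℓ, c j *
      (if p = ℓ - j then ((ℓ - p : ℤ) : ℂ) else if p < ℓ - j then χ (ℓ - j - p) else 0) = 0 := by
  set F : ℕ → ℂ := fun j =>
    c j * (if p = ℓ - j then ((ℓ - p : ℤ) : ℂ) else if p < ℓ - j then χ (ℓ - j - p) else 0)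
  have hext : ∑ j ∈ range ℓ, F j = ∑ j ∈ range (ℓ + 1), F j := by
    simp [F, sum_range_succ, hcℓ]
  rw [hext]
  rcases le_or_gt p ℓ with hp | hp
  · obtain ⟨r, rfl⟩ : ∃ r, ℓ = r + p := ⟨ℓ - p, by omega⟩
    have hF : ∀ j ∈ range (r + p + 1), j ∉ range (r + 1) → F j = 0 := by
      intro j hjℓ hj
      simp only [mem_range, not_lt] at hjℓ hj
      dsimp only [F]
      rw [if_neg (show ¬p = r + p - j by omega), if_neg (show ¬p < r + p - j by omega), mul_zero]
    rw [← sum_subset (range_subset_range.2 (by omega)) hF, sum_range_succ]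
    have hlow : ∀ j ∈ range r, F j = χ (r - j) * c j := by
      intro j hj
      simp only [mem_range] at hj
      dsimp only [F]
      rw [if_neg (show ¬p = r + p - j by omega), if_pos (show p < r + p - j by omega),
        show r + p - j - p = r - j by omega, mul_comm]
    rw [sum_congr rfl hlow, hc r]
    dsimp only [F]
    rw [if_pos (by omega)]
    push_cast
    ring
  · refine sum_eq_zero fun j hj => ?_
    simp only [mem_range] at hj
    dsimp only [F]
    rw [if_neg (show ¬p = ℓ - j by omega), if_neg (show ¬p < ℓ - j by omega), mul_zero]

namespace CliffordFock

variable (M : CliffordFock V)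

theorem ψm_ψp_apply (m s : ℕ) (v : V) :
    M.ψm m (M.ψp (-(s + 1)) v) = (if m = s then v else 0) - M.ψp (-(s + 1)) (M.ψm m v) := by
  have h := LinearMap.congr_fun (M.anti_pm (-(s + 1)) m) v
  have hc : -(s + 1 : ℤ) + m + 1 = 0 ↔ m = s := by omega
  simp only [LinearMap.add_apply, Module.End.mul_apply, hc] at h
  rw [eq_sub_iff_add_eq', h]
  split_ifs <;> rfl

noncomputable def ψpOmega (s k : ℕ) : V := M.ψp (-(s + 1)) (M.Omega k)

theorem Omega_zero : M.Omega 0 = M.vac := by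
  simp [Omega]

theorem Omega_succ (k : ℕ) : M.Omega (k + 1) = M.ψpOmega (k + 1) k := by
  simp [Omega, ψpOmega, List.range'_concat, add_comm]

theorem ψm_Omega_of_lt {k m : ℕ} (h : k < m) : M.ψm m (M.Omega k) = 0 := by
  induction k with
  | zero => rw [Omega_zero, M.vac_m m (Int.natCast_nonneg m)]
  | succ k ih =>
    rw [Omega_succ, ψpOmega, ψm_ψp_apply, if_neg (by omega), ih (by omega), map_zero, sub_zero]

theorem ψm_Omega_succ (k : ℕ) : M.ψm (k + 1 : ℕ) (M.Omega (k + 1)) = M.Omega k := by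
  rw [Omega_succ, ψpOmega, ψm_ψp_apply, if_pos rfl, M.ψm_Omega_of_lt k.lt_succ_self, map_zero,
    sub_zero]

theorem ψm_ψpOmega_of_lt {s k m : ℕ} (h : k < m) :
    M.ψm m (M.ψpOmega s k) = if m = s then M.Omega k else 0 := by
  rw [ψpOmega, ψm_ψp_apply, M.ψm_Omega_of_lt h, map_zero, sub_zero]

theorem ψm_ψpOmega_zero (s m : ℕ) : M.ψm m (M.ψpOmega s 0) = if m = s then M.vac else 0 := by
  rw [ψpOmega, ψm_ψp_apply, Omega_zero, M.vac_m m (Int.natCast_nonneg m), map_zero, sub_zero]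

theorem ψm_succ_ψpOmega_succ {s k : ℕ} (h : k + 1 ≠ s) :
    M.ψm (k + 1 : ℕ) (M.ψpOmega s (k + 1)) = -M.ψpOmega s k := by
  rw [ψpOmega, ψm_ψp_apply, if_neg h, ψm_Omega_succ, zero_sub, ψpOmega]

theorem vac_ne_zero : M.vac ≠ 0 := by
  simpa [M.basis_eq] using M.basis.ne_zero (∅, ∅)


theorem ψm_sum_ψpOmega_zero_self (c : ℕ → ℂ) {ℓ : ℕ} (hℓ : 1 ≤ ℓ) :
    M.ψm ℓ (∑ j ∈ range ℓ, c j • M.ψpOmega (ℓ - j) 0) = c 0 • M.vac := by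
  rw [map_sum, sum_eq_single_of_mem 0 (mem_range.2 hℓ), map_smul, M.ψm_ψpOmega_zero,
    if_pos (Nat.sub_zero ℓ).symm]
  intro j hj hj0
  rw [map_smul, M.ψm_ψpOmega_zero, if_neg (by rw [mem_range] at hj; omega), smul_zero]

theorem sum_ψpOmega_zero_eq (c : ℕ → ℂ) {ℓ : ℕ} (hℓ : 1 ≤ ℓ) :
    ∑ j ∈ range ℓ, c j • M.ψpOmega (ℓ - j) 0 =
      c 0 • M.ψp (-(ℓ + 1 : ℤ)) M.vac +
        ∑ s ∈ Icc 1 (ℓ - 1), c (ℓ - s) • M.ψp (-(s + 1 : ℤ)) M.vac := by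
  obtain ⟨m, rfl⟩ : ∃ m, ℓ = m + 1 := ⟨ℓ - 1, by omega⟩
  rw [sum_range_succ', add_comm, Nat.sub_zero, ψpOmega, Omega_zero]
  congr 1
  refine sum_nbij' (m - ·) (m - ·) ?_ ?_ ?_ ?_ ?_ <;> intro j hj <;>
    simp only [mem_range, mem_Icc, Nat.add_sub_cancel] at hj ⊢
  · omega
  · omega
  · omega
  · omega
  · rw [ψpOmega, Omega_zero, show m + 1 - (j + 1) = m - j by omega,
      show m + 1 - (m - j) = j + 1 by omega]

noncomputable def schurVec (c : ℕ → ℂ) (ℓ t k : ℕ) : V :=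
  ((-1 : ℂ) ^ t * t.factorial) • ∑ j ∈ range (t + 1), c j • M.ψpOmega (ℓ - j) k

end CliffordFock

namespace IsGmFamily

variable {M : CliffordFock V} {χ : ℕ → ℂ} {Gm : ℤ → Module.End ℂ V}

section

variable {ℓ : ℤ}

theorem apply_eq_sum_of_ψm_eq_zero (hGm : IsGmFamily M ℓ χ Gm) {K : ℕ} {v : V}
    (hv : ∀ m : ℕ, K < m → M.ψm m v = 0) (p : ℕ) :
    Gm (p + 1 : ℕ) v =
      ((ℓ - p : ℤ) : ℂ) • M.ψm p v + ∑ n ∈ Icc 1 K, χ n • M.ψm (n + p : ℕ) v := by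
  obtain ⟨N, hN⟩ := hGm (p + 1 : ℕ) v
  have hidx : ∀ n : ℕ, (n : ℤ) + (p + 1 : ℕ) - 1 = (n + p : ℕ) := by intro n; push_cast; ring
  rw [hN (max N K) (le_max_left N K), show ℓ + 1 - (p + 1 : ℕ) = ℓ - p by push_cast; ring,
    show ((p + 1 : ℕ) : ℤ) - 1 = p by push_cast; ring]
  simp only [hidx]
  congr 1
  refine (sum_subset (Icc_subset_Icc_right (le_max_right N K)) fun n hn hnK => ?_).symm
  simp only [mem_Icc, not_and, not_le] at hn hnK
  rw [hv _ (by omega), smul_zero]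

theorem apply_ψpOmega_succ (hGm : IsGmFamily M ℓ χ Gm) {s k : ℕ} (h : k + 1 < s) :
    Gm (k + 2 : ℕ) (M.ψpOmega s (k + 1)) =
      -((ℓ - (k + 1 : ℕ) : ℤ) : ℂ) • M.ψpOmega s k + χ (s - (k + 1)) • M.Omega (k + 1) := by
  have hv (m : ℕ) (hm : s < m) : M.ψm m (M.ψpOmega s (k + 1)) = 0 := by
    rw [M.ψm_ψpOmega_of_lt (by omega), if_neg (by omega)]
  rw [hGm.apply_eq_sum_of_ψm_eq_zero hv (k + 1), M.ψm_succ_ψpOmega_succ h.ne, smul_neg, neg_smul]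
  congr 1
  have hlt (n : ℕ) (hn : n ∈ Icc 1 s) : k + 1 < n + (k + 1) := by
    rw [mem_Icc] at hn; omega
  rw [sum_eq_single_of_mem (s - (k + 1)) (mem_Icc.2 ⟨by omega, by omega⟩),
    M.ψm_ψpOmega_of_lt (hlt _ (mem_Icc.2 ⟨by omega, by omega⟩)), if_pos (by omega)]
  intro n hn hne
  rw [M.ψm_ψpOmega_of_lt (hlt n hn), if_neg (by omega), smul_zero]

theorem apply_ψpOmega_zero (hGm : IsGmFamily M ℓ χ Gm) (s p : ℕ) :
    Gm (p + 1 : ℕ) (M.ψpOmega s 0) =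
      (if p = s then ((ℓ - p : ℤ) : ℂ) else if p < s then χ (s - p) else 0) • M.vac := by
  have hv (m : ℕ) (hm : s < m) : M.ψm m (M.ψpOmega s 0) = 0 := by
    rw [M.ψm_ψpOmega_zero, if_neg hm.ne']
  rw [hGm.apply_eq_sum_of_ψm_eq_zero hv p]
  simp only [M.ψm_ψpOmega_zero, smul_ite, smul_zero]
  split_ifs with hps hlt
  · rw [sum_eq_zero fun n hn => if_neg (by rw [mem_Icc] at hn; omega), add_zero]
  · rw [zero_add, sum_eq_single_of_mem (s - p) (mem_Icc.2 ⟨by omega, by omega⟩), if_pos (by omega)]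
    intro n _ hne
    rw [if_neg (by omega)]
  · rw [zero_add, zero_smul]
    exact sum_eq_zero fun n _ => if_neg (by omega)

end

variable {ℓ : ℕ} {c : ℕ → ℂ}

theorem apply_schurVec (hGm : IsGmFamily M ℓ χ Gm)
    (hc : SchurRecursion χ c) {t k : ℕ} (h : t + k + 2 = ℓ) :
    Gm (k + 2 : ℕ) (M.schurVec c ℓ t (k + 1)) = M.schurVec c ℓ (t + 1) k := by
  have hterm : ∀ j ∈ range (t + 1), c j • Gm (k + 2 : ℕ) (M.ψpOmega (ℓ - j) (k + 1)) =
      -(t + 1 : ℂ) • (c j • M.ψpOmega (ℓ - j) k) + (χ (t + 1 - j) * c j) • M.Omega (k + 1) := by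
    intro j hj
    rw [mem_range] at hj
    rw [hGm.apply_ψpOmega_succ (by omega), show ((ℓ : ℤ) - (k + 1 : ℕ)) = t + 1 by omega,
      show ℓ - j - (k + 1) = t + 1 - j by omega]
    push_cast
    module
  rw [CliffordFock.schurVec, map_smul, map_sum]
  simp only [map_smul]
  rw [sum_congr rfl hterm, sum_add_distrib, ← smul_sum, ← sum_smul, hc, M.Omega_succ,
    show k + 1 = ℓ - (t + 1) by omega, CliffordFock.schurVec, sum_range_succ _ (t + 1),
    pow_succ, Nat.factorial_succ]
  push_cast
  module

theorem prod_apply_Omega (hGm : IsGmFamily M ℓ χ Gm)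
    (hc : SchurRecursion χ c) (hc0 : c 0 = 1) {t k : ℕ} (h : t + k + 1 = ℓ) :
    ((List.range' (k + 2) t).map fun n : ℕ => Gm n).prod (M.Omega ℓ) = M.schurVec c ℓ t k := by
  induction t generalizing k with
  | zero =>
    subst h
    simp [CliffordFock.schurVec, hc0, CliffordFock.Omega_succ]
  | succ t ih =>
    rw [List.range'_succ, List.map_cons, List.prod_cons, Module.End.mul_apply,
      show k + 2 + 1 = k + 1 + 2 by ring, ih (by omega), hGm.apply_schurVec hc (by omega)]

theorem prod_range'_apply_Omega (hGm : IsGmFamily M ℓ χ Gm)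
    (hc : SchurRecursion χ c) (hc0 : c 0 = 1) (hℓ : 1 ≤ ℓ) :
    ((List.range' 2 (ℓ - 1)).map Gm).prod (M.Omega ℓ) =
      ((-1 : ℂ) ^ (ℓ - 1) * (ℓ - 1).factorial) • ∑ j ∈ range ℓ, c j • M.ψpOmega (ℓ - j) 0 := by
  have h := hGm.prod_apply_Omega hc hc0 (t := ℓ - 1) (k := 0) (by omega)
  rw [CliffordFock.schurVec, zero_add, Nat.sub_add_cancel hℓ] at h
  rw [← h]
  simp only [bind_pure_comp, List.map_eq_map, List.map_map]
  rfl

theorem apply_sum_ψpOmega_zero_eq_zero (hGm : IsGmFamily M ℓ χ Gm)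
    (hc : SchurRecursion χ c) (hcℓ : c ℓ = 0) {n : ℤ} (hn : 1 ≤ n) :
    Gm n (∑ j ∈ range ℓ, c j • M.ψpOmega (ℓ - j) 0) = 0 := by
  obtain ⟨p, rfl⟩ : ∃ p : ℕ, n = (p + 1 : ℕ) := ⟨(n - 1).toNat, by omega⟩
  simp only [map_sum, map_smul, hGm.apply_ψpOmega_zero, smul_smul, ← sum_smul,
    sum_mul_ite_eq_zero hc hcℓ, zero_smul]

end IsGmFamily

theorem singular_vector_w (M : CliffordFock V)
    (S : ℕ → MvPolynomial ℕ ℚ) (hS : IsSchurFamily S)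
    (ℓ : ℕ) (hℓ : 1 ≤ ℓ) (χ : ℕ → ℂ)
    (Gm : ℤ → Module.End ℂ V) (hGm : IsGmFamily M (ℓ : ℤ) χ Gm)
    (hval : MvPolynomial.aeval (fun n : ℕ => -χ n) (S ℓ) = 0)
    (w : V) (hw : w = (((List.range' 2 (ℓ - 1)).map Gm).prod) (M.Omega ℓ)) :
    (∀ n : ℤ, 1 ≤ n → Gm n w = 0) ∧ w ≠ 0 ∧
      ∃ a : ℕ → ℂ,
        w = ((-1 : ℂ) ^ (ℓ - 1) * ((ℓ - 1).factorial : ℂ)) • M.ψp (-(ℓ + 1 : ℤ)) M.vac +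
          ∑ s ∈ Finset.Icc 1 (ℓ - 1), a s • M.ψp (-(s + 1 : ℤ)) M.vac := by
  set c : ℕ → ℂ := fun j => MvPolynomial.aeval (fun n => -χ n) (S j)
  have hc : SchurRecursion χ c := hS.schurRecursion_aeval_neg χ
  have hc0 : c 0 = 1 := hS.aeval_zero _
  have hC : (-1 : ℂ) ^ (ℓ - 1) * ((ℓ - 1).factorial : ℂ) ≠ 0 :=
    mul_ne_zero (pow_ne_zero _ (neg_ne_zero.2 one_ne_zero))
      (Nat.cast_ne_zero.2 (ℓ - 1).factorial_ne_zero)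
  rw [hGm.prod_range'_apply_Omega hc hc0 hℓ] at hw
  subst hw
  refine ⟨fun n hn => ?_, fun h0 => ?_,
    ⟨fun s => (-1) ^ (ℓ - 1) * (ℓ - 1).factorial * c (ℓ - s), ?_⟩⟩
  · rw [map_smul, hGm.apply_sum_ψpOmega_zero_eq_zero hc hval hn, smul_zero]
  · have h := congrArg (M.ψm ℓ) h0
    rw [map_smul, M.ψm_sum_ψpOmega_zero_self c hℓ, hc0, one_smul, map_zero] at h
    exact M.vac_ne_zero ((smul_eq_zero.1 h).resolve_left hC)
  · simp only [M.sum_ψpOmega_zero_eq c hℓ, hc0, one_smul, smul_add, smul_sum, smul_smul]
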